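/- arXiv:math/0512288 — 3 statements merged into one kernel-verified Lean document; each statement's English description precedes it below -/
import Mathlib

section
/- In the four-dimensional HP algebra spanned by {d_t, e₋, e⁺, e} with multiplication e₋e⁺ = d_t, e₋e = e₋, ee⁺ = e⁺, e² = e and all other products zero, every two-dimensional *-subalgebra containing d_t is commutative. -/
/-!
`d_t` annihilates the whole HP algebra from both sides. In a two-dimensional space `S`
containing `z ≠ 0`, of any two elements `x, y` one lies in the span of `z` and the other,
say `x = a • z + b • y`; if `z` annihilates `y`, then `x * y` and `y * x` both equal
`b • (y * y)`.
-/

open Matrix Module Submodule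

theorem Submodule.mem_span_pair_or_mem_span_pair_of_finrank_eq_two
    {K V : Type*} [Field K] [AddCommGroup V] [Module K V] {S : Submodule K V}
    (hS : finrank K S = 2) {z x y : V} (hz : z ∈ S) (hz0 : z ≠ 0) (hx : x ∈ S) (hy : y ∈ S) :
    x ∈ span K {z, y} ∨ y ∈ span K {z, x} := by
  by_cases hxz : x ∈ K ∙ z
  · exact .inl (span_mono (by simp) hxz)
  · have : FiniteDimensional K S := finite_of_finrank_eq_succ hS
    have hli : LinearIndependent K ![z, x] :=
      (LinearIndependent.pair_iff' hz0).2 fun a h => hxz (mem_span_singleton.2 ⟨a, h⟩)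
    have hspan : span K {z, x} = S := by
      refine eq_of_le_of_finrank_eq (span_le.2 (by simp [Set.insert_subset_iff, hz, hx])) ?_
      have := finrank_span_eq_card hli
      rw [range_cons, range_cons, range_empty, Set.union_empty, Set.singleton_union] at this
      rw [this, hS, Fintype.card_fin]
    exact .inr (hspan ▸ hy)

section

variable {K R : Type*} [Field K] [NonUnitalRing R] [Module K R] [IsScalarTower K R R]
  [SMulCommClass K R R]

theorem commute_of_mem_span_pair {z x y : R} (hzy : z * y = 0) (hyz : y * z = 0)
    (hx : x ∈ span K {z, y}) : Commute x y := by
  obtain ⟨a, b, rfl⟩ := mem_span_pair.1 hx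
  simp only [Commute, SemiconjBy, add_mul, mul_add, smul_mul_assoc, mul_smul_comm, hzy, hyz]

theorem commute_of_finrank_eq_two_of_annihilating_mem {S : Submodule K R}
    (hS : finrank K S = 2) {z : R} (hz : z ∈ S) (hz0 : z ≠ 0)
    (hann : ∀ x ∈ S, z * x = 0 ∧ x * z = 0) {x y : R} (hx : x ∈ S) (hy : y ∈ S) :
    Commute x y := by
  rcases mem_span_pair_or_mem_span_pair_of_finrank_eq_two hS hz hz0 hx hy with h | h
  · exact commute_of_mem_span_pair (hann y hy).1 (hann y hy).2 h
  · exact (commute_of_mem_span_pair (hann x hx).1 (hann x hx).2 h).symm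

end

theorem single_zero_two_mul_and_mul_eq_zero_of_mem_span
    {Z : Matrix (Fin 3) (Fin 3) ℂ}
    (hZ : Z ∈ span ℂ {single 0 2 1, single 0 1 1, single 1 2 1, single 1 1 1}) :
    single 0 2 1 * Z = 0 ∧ Z * single 0 2 1 = 0 := by
  have hle : span ℂ {single 0 2 1, single 0 1 1, single 1 2 1, single 1 1 1} ≤
      LinearMap.ker (LinearMap.mulLeft ℂ (single 0 2 1 : Matrix (Fin 3) (Fin 3) ℂ)) ⊓
        LinearMap.ker (LinearMap.mulRight ℂ (single 0 2 1 : Matrix (Fin 3) (Fin 3) ℂ)) :=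
    span_le.2 (by simp [Set.insert_subset_iff, single_mul_single_of_ne])
  simpa using hle hZ

theorem two_dim_star_subalgebra_of_hp_is_commutative_general
    (Dt Em Ep E : Matrix (Fin 3) (Fin 3) ℂ)
    (hDt : Dt = Matrix.single 0 2 1) (hEm : Em = Matrix.single 0 1 1)
    (hEp : Ep = Matrix.single 1 2 1) (hE : E = Matrix.single 1 1 1)
    (A : Submodule ℂ (Matrix (Fin 3) (Fin 3) ℂ))
    (hA : A = Submodule.span ℂ {Dt, Em, Ep, E})
    (S : Submodule ℂ (Matrix (Fin 3) (Fin 3) ℂ))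
    (hSA : S ≤ A)
    (hdt : Dt ∈ S)
    (hdim : Module.finrank ℂ S = 2) :
    ∀ X ∈ S, ∀ Y ∈ S, X * Y = Y * X := by
  subst hDt hEm hEp hE hA
  intro X hX Y hY
  refine (commute_of_finrank_eq_two_of_annihilating_mem hdim hdt ?_
    (fun Z hZ => single_zero_two_mul_and_mul_eq_zero_of_mem_span (hSA hZ)) hX hY).eq
  exact fun h => (one_ne_zero : (1 : ℂ) ≠ 0) (by simpa using congrFun₂ h 0 2)

/-- In the four-dimensional HP algebra, realized as the span of the matrix
units `{D_t, e₋, e⁺, e} = {E₁₃, E₁₂, E₂₃, E₂₂}` in `M₃(ℂ)` with involution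
`X ↦ G Xᴴ G`, every two-dimensional *-subalgebra containing `d_t` is
commutative. -/
theorem two_dim_star_subalgebra_of_hp_is_commutative
    (Dt Em Ep E G : Matrix (Fin 3) (Fin 3) ℂ)
    (hDt : Dt = Matrix.single 0 2 1) (hEm : Em = Matrix.single 0 1 1)
    (hEp : Ep = Matrix.single 1 2 1) (hE : E = Matrix.single 1 1 1)
    (hG : G = Matrix.single 0 2 1 + Matrix.single 1 1 1 + Matrix.single 2 0 1)
    (A : Submodule ℂ (Matrix (Fin 3) (Fin 3) ℂ))
    (hA : A = Submodule.span ℂ {Dt, Em, Ep, E})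
    (S : Submodule ℂ (Matrix (Fin 3) (Fin 3) ℂ))
    (hSA : S ≤ A)
    (hmul : ∀ X ∈ S, ∀ Y ∈ S, X * Y ∈ S)
    (hstar : ∀ X ∈ S, G * Xᴴ * G ∈ S)
    (hdt : Dt ∈ S)
    (hdim : Module.finrank ℂ S = 2) :
    ∀ X ∈ S, ∀ Y ∈ S, X * Y = Y * X :=
  two_dim_star_subalgebra_of_hp_is_commutative_general Dt Em Ep E hDt hEm hEp hE A hA S hSA hdt hdim
end

section
/- Let H be a Hilbert space, A ⊆ B(H) a *-subalgebra, and K = H ⊕ H† the two-sided A-module with A(ζ⊕η) = Aζ, (ζ⊕η)A = ηA. On 𝔞 = ℂ ⊕ K ⊕ A define the product by (α,ξ,A)*·(α,ξ,A) = (⟨ξ|ξ⟩₊, ξ*A + A†ξ, A†A) and the involution (α,ξ,A)* = (ᾱ, ξ*, A†), where ξ* = η†⊕ζ† for ξ = ζ⊕η and ⟨ζ⊕η'|ζ'⊕η⟩₊ = (ζ|ζ'). Then this product is associative, d_t = (1,0,0) is a self-adjoint annihilator, and l(α,ξ,A) = α is a positive *-functional with l(d_t)=1: in particular l(a*·a)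 = ‖ζ‖² ≥ 0. -/
open scoped InnerProductSpace ComplexConjugate

/-- An element `(α, ζ, η, A)` of the vacuum Itô algebra `ℂ ⊕ (H ⊕ H†) ⊕ B(H)`:
`α ∈ ℂ`, ket `ζ ∈ H`, bra `η† ∈ H†` represented by its ket `η ∈ H`, and
operator `A`. -/
noncomputable def vacuumMul {H : Type*} [NormedAddCommGroup H]
    [InnerProductSpace ℂ H] [CompleteSpace H]
    (a b : ℂ × H × H × (H →L[ℂ] H)) : ℂ × H × H × (H →L[ℂ] H) :=
  (⟪a.2.2.1, b.2.1⟫_ℂ, a.2.2.2 b.2.1,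
    ContinuousLinearMap.adjoint b.2.2.2 a.2.2.1, a.2.2.2 ∘L b.2.2.2)

noncomputable def vacuumStar {H : Type*} [NormedAddCommGroup H]
    [InnerProductSpace ℂ H] [CompleteSpace H]
    (a : ℂ × H × H × (H →L[ℂ] H)) : ℂ × H × H × (H →L[ℂ] H) :=
  (conj a.1, a.2.2.1, a.2.1, ContinuousLinearMap.adjoint a.2.2.2)

/-- The vacuum Itô B*-algebra structure: the product on
`𝔞 = ℂ ⊕ (H ⊕ H†) ⊕ A` is associative, its restriction to elements whose
operator part lies in a *-subalgebra `𝒜 ⊆ B(H)` is closed under product and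
involution, `d_t = (1,0,0,0)` is a self-adjoint annihilator, and
`l(α,ξ,A) = α` is a positive *-functional with `l(d_t) = 1`; in particular
`l(a*·a) = ‖ζ‖² ≥ 0`. -/
theorem vacuum_ito_algebra_axioms
    {H : Type*} [NormedAddCommGroup H] [InnerProductSpace ℂ H]
    [CompleteSpace H] (𝒜 : StarSubalgebra ℂ (H →L[ℂ] H))
    (d : ℂ × H × H × (H →L[ℂ] H)) (hd : d = (1, 0, 0, 0))
    (l : ℂ × H × H × (H →L[ℂ] H) → ℂ) (hl : ∀ a, l a = a.1) :
    (∀ a b c : ℂ × H × H × (H →L[ℂ] H),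
        vacuumMul (vacuumMul a b) c = vacuumMul a (vacuumMul b c)) ∧
    (∀ a b : ℂ × H × H × (H →L[ℂ] H), a.2.2.2 ∈ 𝒜 → b.2.2.2 ∈ 𝒜 →
        (vacuumMul a b).2.2.2 ∈ 𝒜) ∧
    (∀ a : ℂ × H × H × (H →L[ℂ] H), a.2.2.2 ∈ 𝒜 → (vacuumStar a).2.2.2 ∈ 𝒜) ∧
    vacuumStar d = d ∧
    (∀ a : ℂ × H × H × (H →L[ℂ] H), vacuumMul a d = 0 ∧ vacuumMul d a = 0) ∧
    l d = 1 ∧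
    (∀ a, l (vacuumStar a) = conj (l a)) ∧
    (∀ a : ℂ × H × H × (H →L[ℂ] H),
        l (vacuumMul (vacuumStar a) a) = (‖a.2.1‖ : ℂ) ^ 2) := by
  subst hd
  refine ⟨?_, ?_, ?_, ?_, ?_, ?_, ?_, ?_⟩
  · intro a b c
    simp [vacuumMul, Prod.ext_iff, ContinuousLinearMap.comp_assoc,
      ContinuousLinearMap.adjoint_comp]
    exact ContinuousLinearMap.adjoint_inner_left _ _ _
  · intro a b ha hb
    exact mul_mem ha hb
  · intro a ha
    exact star_mem ha
  · simp [vacuumStar]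
  · intro a
    constructor <;> simp [vacuumMul, Prod.ext_iff]
  · simp [hl]
  · intro a
    simp [hl, vacuumStar]
  · intro a
    simp [hl, vacuumMul, vacuumStar, inner_self_eq_norm_sq_to_K]
end

section
/- Let 𝔞 = ℂ ⊕ (H ⊕ H†) ⊕ A be a vacuum Itô algebra with A ⊆ B(H) a *-subalgebra, and let P be the largest orthogonal projection in H with AP = {0} (so E = 1−P supports A). Then 𝔟 = {(β, Pζ ⊕ ηP, 0)} is a *-subalgebra with zero product modulo ℂd_t (Brownian part), 𝔠 = {(γ, Eζ ⊕ ηE, A)} is a *-subalgebra (Lévy part), 𝔟·𝔠 = {0}, and every a ∈ 𝔞 decomposes uniquely as a = α d_t + y + z with y ∈ 𝔟 ∩ ker l, z ∈ 𝔠 ∩ ker l. -/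
open scoped InnerProductSpace ComplexConjugate

/-- Lévy–Khinchin decomposition of a vacuum Itô algebra
`𝔞 = ℂ ⊕ (H ⊕ H†) ⊕ 𝒜`: with `P` the largest orthoprojection killed by `𝒜`,
the Brownian part `𝔟` (zero operator part, vectors in the range of `P`) is a
*-subalgebra with product in `ℂd_t`, the Lévy part `𝔠` (vectors in the range
of `E = 1 − P`, operator part in `𝒜`) is a *-subalgebra, `𝔟·𝔠 = {0} = 𝔠·𝔟`,
and every element of `𝔞` decomposes uniquely as `a = l(a)·d_t + y + z` with
`y ∈ 𝔟 ∩ ker l`, `z ∈ 𝔠 ∩ ker l`. -/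
theorem vacuum_ito_algebra_levy_khinchin_decomposition
    {H : Type*} [NormedAddCommGroup H] [InnerProductSpace ℂ H]
    [CompleteSpace H] (𝒜 : StarSubalgebra ℂ (H →L[ℂ] H))
    (P : H →L[ℂ] H) (hP_sa : IsSelfAdjoint P) (hP_idem : P ∘L P = P)
    (hP_kill : ∀ A ∈ 𝒜, A ∘L P = 0)
    (hP_max : ∀ Q : H →L[ℂ] H, IsSelfAdjoint Q → Q ∘L Q = Q →
      (∀ A ∈ 𝒜, A ∘L Q = 0) → P ∘L Q = Q)
    (d : ℂ × H × H × (H →L[ℂ] H)) (hd : d = (1, 0, 0, 0))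
    (l : ℂ × H × H × (H →L[ℂ] H) → ℂ) (hl : ∀ a, l a = a.1)
    (𝔟 𝔠 : Set (ℂ × H × H × (H →L[ℂ] H)))
    (h𝔟 : 𝔟 = {a | P a.2.1 = a.2.1 ∧ P a.2.2.1 = a.2.2.1 ∧ a.2.2.2 = 0})
    (h𝔠 : 𝔠 = {a | P a.2.1 = 0 ∧ P a.2.2.1 = 0 ∧ a.2.2.2 ∈ 𝒜}) :
    (∀ y ∈ 𝔟, ∀ y' ∈ 𝔟, ∃ c : ℂ, vacuumMul y y' = c • d) ∧
    (∀ y ∈ 𝔟, vacuumStar y ∈ 𝔟) ∧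
    (∀ z ∈ 𝔠, ∀ z' ∈ 𝔠, vacuumMul z z' ∈ 𝔠) ∧
    (∀ z ∈ 𝔠, vacuumStar z ∈ 𝔠) ∧
    (∀ y ∈ 𝔟, ∀ z ∈ 𝔠, vacuumMul y z = 0 ∧ vacuumMul z y = 0) ∧
    (∀ a : ℂ × H × H × (H →L[ℂ] H), a.2.2.2 ∈ 𝒜 →
      ∃! yz : (ℂ × H × H × (H →L[ℂ] H)) × (ℂ × H × H × (H →L[ℂ] H)),
        yz.1 ∈ 𝔟 ∧ yz.2 ∈ 𝔠 ∧ l yz.1 = 0 ∧ l yz.2 = 0 ∧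
        a = l a • d + yz.1 + yz.2) := by

  subst h𝔟 h𝔠 hd
  -- P kills 𝒜 from the left too
  have hPA : ∀ A ∈ 𝒜, P ∘L A = 0 := by
    intro A hA
    have h := hP_kill (star A) (star_mem hA)
    have := congrArg ContinuousLinearMap.adjoint h
    rwa [ContinuousLinearMap.adjoint_comp, map_zero,
      hP_sa.adjoint_eq, ContinuousLinearMap.star_eq_adjoint,
      ContinuousLinearMap.adjoint_adjoint] at this
  have hPadj : ∀ A ∈ 𝒜, ContinuousLinearMap.adjoint A ∈ 𝒜 := by
    intro A hA
    simpa [ContinuousLinearMap.star_eq_adjoint] using star_mem hA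
  refine ⟨?_, ?_, ?_, ?_, ?_, ?_⟩
  · rintro y ⟨hy1, hy2, hy3⟩ y' ⟨hy1', hy2', hy3'⟩
    refine ⟨⟪y.2.2.1, y'.2.1⟫_ℂ, ?_⟩
    simp [vacuumMul, hy3, hy3', Prod.ext_iff]
  · rintro y ⟨hy1, hy2, hy3⟩
    exact ⟨hy2, hy1, by simp [vacuumStar, hy3]⟩
  · rintro z ⟨hz1, hz2, hz3⟩ z' ⟨hz1', hz2', hz3'⟩
    refine ⟨?_, ?_, 𝒜.mul_mem hz3 hz3'⟩
    · have := hPA _ hz3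
      calc P (z.2.2.2 z'.2.1) = (P ∘L z.2.2.2) z'.2.1 := rfl
        _ = 0 := by rw [this]; rfl
    · have := hP_kill _ (hPadj _ hz3')
      have h2 : ContinuousLinearMap.adjoint z'.2.2.2 ∘L P = 0 := this
      calc P (ContinuousLinearMap.adjoint z'.2.2.2 z.2.2.1)
          = (P ∘L ContinuousLinearMap.adjoint z'.2.2.2) z.2.2.1 := rfl
        _ = 0 := by rw [hPA _ (hPadj _ hz3')]; rfl
  · rintro z ⟨hz1, hz2, hz3⟩
    exact ⟨hz2, hz1, hPadj _ hz3⟩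
  · rintro y ⟨hy1, hy2, hy3⟩ z ⟨hz1, hz2, hz3⟩
    constructor
    · have h1 : ⟪y.2.2.1, z.2.1⟫_ℂ = 0 := by
        rw [← hy2, ← hP_sa.adjoint_eq, ContinuousLinearMap.adjoint_inner_left,
          hz1, inner_zero_right]
      have h2 : ContinuousLinearMap.adjoint z.2.2.2 y.2.2.1 = 0 := by
        rw [← hy2]
        have := hP_kill _ (hPadj _ hz3)
        calc ContinuousLinearMap.adjoint z.2.2.2 (P y.2.2.1)
            = (ContinuousLinearMap.adjoint z.2.2.2 ∘L P) y.2.2.1 := rfl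
          _ = 0 := by rw [this]; rfl
      simp [vacuumMul, hy3, h1, h2, Prod.ext_iff]
    · have h1 : ⟪z.2.2.1, y.2.1⟫_ℂ = 0 := by
        rw [← hy1, ← hP_sa.adjoint_eq, ContinuousLinearMap.adjoint_inner_right,
          hz2, inner_zero_left]
      have h2 : z.2.2.2 y.2.1 = 0 := by
        rw [← hy1]
        calc z.2.2.2 (P y.2.1) = (z.2.2.2 ∘L P) y.2.1 := rfl
          _ = 0 := by rw [hP_kill _ hz3]; rfl
      simp [vacuumMul, hy3, h1, h2, Prod.ext_iff]
  · intro a hA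
    have hPP : ∀ x : H, P (P x) = P x := fun x =>
      congrFun (congrArg DFunLike.coe hP_idem) x
    refine ⟨⟨(0, P a.2.1, P a.2.2.1, 0),
             (0, a.2.1 - P a.2.1, a.2.2.1 - P a.2.2.1, a.2.2.2)⟩,
      ⟨⟨hPP _, hPP _, rfl⟩, ⟨by simp [hPP], by simp [hPP], hA⟩,
        hl _, hl _, ?_⟩, ?_⟩
    · rw [hl]
      refine Prod.ext (by simp) (Prod.ext (by simp) (Prod.ext (by simp) (by simp)))
    · rintro ⟨y, z⟩ ⟨⟨hy1, hy2, hy3⟩, ⟨hz1, hz2, hz3⟩, hly, hlz, heq⟩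
      rw [hl] at hly hlz
      rw [hl, Prod.ext_iff, Prod.ext_iff, Prod.ext_iff] at heq
      simp only [Prod.fst_add, Prod.snd_add, Prod.smul_mk, Prod.smul_snd,
        Prod.smul_fst, smul_zero, zero_add] at heq
      obtain ⟨e1, e2, e3, e4⟩ := heq
      have hy1' : y.2.1 = P a.2.1 := by
        have := congrArg P e2
        simp only [map_add, hy1, hz1, add_zero] at this
        exact this.symm
      have hy2' : y.2.2.1 = P a.2.2.1 := by
        have := congrArg P e3
        simp only [map_add, hy2, hz2, add_zero] at this
        exact this.symm
      rw [hy1'] at e2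
      rw [hy2'] at e3
      have hz1' : z.2.1 = a.2.1 - P a.2.1 := eq_sub_of_add_eq' e2.symm
      have hz2' : z.2.2.1 = a.2.2.1 - P a.2.2.1 := eq_sub_of_add_eq' e3.symm
      have hz4 : z.2.2.2 = a.2.2.2 := by rw [e4, hy3, zero_add]
      refine Prod.ext ?_ ?_
      · exact Prod.ext hly (Prod.ext hy1' (Prod.ext hy2' hy3))
      · exact Prod.ext hlz (Prod.ext hz1' (Prod.ext hz2' hz4.symm.symm))
end
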